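/- Let H = H₀ ⊕ H₁ be an orthogonal decomposition of a finite-dimensional inner product space and let X be a self-adjoint linear operator on H with blocks Xᵢⱼ (i, j = 0, 1). Then the factorization X = [[I, (X₁₁⁺X₁₀)*],[0, I]] · [[X₀₀ − X₀₁X₁₁⁺X₁₀, 0],[0, X₁₁]] · [[I, 0],[X₁₁⁺X₁₀, I]] holds if and only if ker X₁₁ ⊆ ker X₀₁. In particular, if in addition X ≥ 0, then ker X₁₁ ⊆ ker X₀₁ and the factorization holds. -/

import Mathlib

/-!
A Moore–Penrose inverse `B` of the self-adjoint block `X₁₁` is self-adjoint and commutes with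
`X₁₁`, hence is supported on `H₁`. Multiplying out, the three factors give
`X₀₀ + X₁₁ + X₁₁X₁₁⁺X₁₀ + X₀₁X₁₁⁺X₁₁`, so the factorization holds iff `X₀₁X₁₁⁺X₁₁ = X₀₁`
(the `(1,0)` block is its adjoint). As `X₁₁X₁₁⁺X₁₁ = X₁₁`, this is exactly
`ker X₁₁ ⊆ ker X₀₁`. If `X ≥ 0` and `X₁₁v = 0`, then `⟪X Γ₁v, Γ₁v⟫ = 0`, which for a positive
operator forces `X Γ₁v = 0`.
-/

/-- The generalized Schur complement `X₀₀ - X₀₁ X₁₁⁺ X₁₀` of an operator `X` on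
`H = H₀ ⊕ H₁` (orthogonal projections `P0, P1`), where `B` is the Moore–Penrose
pseudoinverse of the block `X₁₁ = P1 X P1`. -/
noncomputable def gschurLM {𝕂 : Type*} [RCLike 𝕂] {H : Type*} [NormedAddCommGroup H]
    [InnerProductSpace 𝕂 H] (P0 P1 X B : H →ₗ[𝕂] H) : H →ₗ[𝕂] H :=
  (P0 ∘ₗ (X ∘ₗ P0)) - (P0 ∘ₗ (X ∘ₗ P1)) ∘ₗ (B ∘ₗ (P1 ∘ₗ (X ∘ₗ P0)))

structure IsMoorePenroseInverse {R : Type*} [Mul R] [Star R] (a b : R) : Prop where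
  inv_mul_inv : b * (a * b) = b
  mul_inv_mul : a * (b * a) = a
  isSelfAdjoint_inv_mul : IsSelfAdjoint (b * a)
  isSelfAdjoint_mul_inv : IsSelfAdjoint (a * b)

namespace IsMoorePenroseInverse

variable {R : Type*} [Monoid R] [StarMul R] {a b p : R}

theorem commute (h : IsMoorePenroseInverse a b) (ha : IsSelfAdjoint a) : Commute a b := by
  have hba : a * star b = b * a := by
    rw [← h.isSelfAdjoint_inv_mul.star_eq, star_mul, ha.star_eq]
  have hab : star b * a = a * b := by
    rw [← h.isSelfAdjoint_mul_inv.star_eq, star_mul, ha.star_eq]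
  have haba : a * star b * a = a := by
    simpa only [star_mul, ha.star_eq, mul_assoc] using congrArg star h.mul_inv_mul
  have haab : a * (a * b) = a := by rw [← hab, ← mul_assoc, haba]
  calc a * b = a * star b * a * b := by rw [haba]
    _ = b * a * (a * b) := by rw [hba, mul_assoc]
    _ = b * a := by rw [mul_assoc, haab]

theorem isSelfAdjoint (h : IsMoorePenroseInverse a b) (ha : IsSelfAdjoint a) :
    IsSelfAdjoint b := by
  have hba : a * star b = b * a := by
    rw [← h.isSelfAdjoint_inv_mul.star_eq, star_mul, ha.star_eq]
  have habb : a * b * star b = star b := by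
    simpa only [star_mul, h.isSelfAdjoint_mul_inv.star_eq, mul_assoc]
      using congrArg star h.inv_mul_inv
  calc star b = a * b * star b := habb.symm
    _ = b * (a * star b) := by rw [(h.commute ha).eq, mul_assoc]
    _ = b := by rw [hba, ← (h.commute ha).eq, h.inv_mul_inv]

theorem mul_eq_self (h : IsMoorePenroseInverse a b) (ha : IsSelfAdjoint a) (hp : a * p = a) :
    b * p = b := by
  have hbba : b * b * a = b := by rw [mul_assoc, ← (h.commute ha).eq, h.inv_mul_inv]
  rw [← hbba, mul_assoc (b * b), hp]

theorem mul_eq_self' (h : IsMoorePenroseInverse a b) (ha : IsSelfAdjoint a) (hp : p * a = a) :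
    p * b = b := by
  have habb : a * (b * b) = b := by
    rw [← mul_assoc, (h.commute ha).eq, mul_assoc, h.inv_mul_inv]
  rw [← habb, ← mul_assoc, hp]

end IsMoorePenroseInverse

section Ring

variable {R : Type*} [Ring R] {p0 p1 x b : R}

theorem schur_factorization_expand (hp0b : p0 * b = 0) (hbp0 : b * p0 = 0)
    (hb : b * (p1 * (x * p1) * b) = b) :
    (1 + p0 * (x * p1) * b) *
        ((p0 * (x * p0) - p0 * (x * p1) * (b * (p1 * (x * p0))) + p1 * (x * p1)) *
          (1 + b * (p1 * (x * p0)))) =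
      p0 * (x * p0) + p1 * (x * p1) + p1 * (x * p1) * (b * (p1 * (x * p0))) +
        p0 * (x * p1) * (b * (p1 * (x * p1))) := by
  linear_combination (norm := noncomm_ring)
    (p0 * x) * hp0b * (p1 * (x * p0))
    - (p0 * (x * p1)) * (b * (p1 * x)) * hp0b * (p1 * (x * p0))
    + (p0 * (x * p1)) * hbp0 * (x * p0)
    - (p0 * (x * p1)) * hbp0 * ((x * p1) * (b * (p1 * (x * p0))))
    + (p0 * (x * p1)) * hbp0 * ((x * p0) * (b * (p1 * (x * p0))))
    - (p0 * (x * p1)) * hbp0 * ((x * p1) * (b * (p1 * (x * p0))) * (b * (p1 * (x * p0))))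
    + (p0 * (x * p1)) * hb * (p1 * (x * p0))

variable [StarRing R]

theorem eq_schur_factorization_iff (hp1 : IsStarProjection p1) (hsum : p0 + p1 = 1)
    (hx : IsSelfAdjoint x) (hb : IsMoorePenroseInverse (p1 * (x * p1)) b) :
    x = (1 + star (b * (p1 * (x * p0)))) *
        ((p0 * (x * p0) - p0 * (x * p1) * (b * (p1 * (x * p0))) + p1 * (x * p1)) *
          (1 + b * (p1 * (x * p0)))) ↔
      p0 * (x * p1) * (b * (p1 * (x * p1))) = p0 * (x * p1) := by
  have hp0 : p0 = 1 - p1 := eq_sub_of_add_eq hsum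
  have hp1p1 : p1 * p1 = p1 := hp1.isIdempotentElem.eq
  have hp0' : IsStarProjection p0 := hp0 ▸ hp1.one_sub
  have hp0p1 : p0 * p1 = 0 := by rw [hp0, sub_mul, one_mul, hp1p1, sub_self]
  have hp1p0 : p1 * p0 = 0 := by rw [hp0, mul_sub, mul_one, hp1p1, sub_self]
  have ha : IsSelfAdjoint (p1 * (x * p1)) := by
    simp only [IsSelfAdjoint, star_mul, hp1.isSelfAdjoint.star_eq, hx.star_eq, mul_assoc]
  have hbp1 : b * p1 = b := hb.mul_eq_self ha (by rw [mul_assoc, mul_assoc, hp1p1])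
  have hp1b : p1 * b = b := hb.mul_eq_self' ha (by rw [← mul_assoc, hp1p1])
  have hbp0 : b * p0 = 0 := by rw [← hbp1, mul_assoc, hp1p0, mul_zero]
  have hp0b : p0 * b = 0 := by rw [← hp1b, ← mul_assoc, hp0p1, zero_mul]
  have hstar : star (b * (p1 * (x * p0))) = p0 * (x * p1) * b := by
    simp only [star_mul, (hb.isSelfAdjoint ha).star_eq, hp0'.isSelfAdjoint.star_eq,
      hp1.isSelfAdjoint.star_eq, hx.star_eq, mul_assoc]
  rw [hstar, schur_factorization_expand hp0b hbp0 hb.inv_mul_inv]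
  constructor
  · intro hfact
    linear_combination (norm := noncomm_ring) -(p0 * hfact * p1) - p0 * p0 * x * hp0p1
      - hp0p1 * (x * p1 * p1) - hp0p1 * (x * p1 * b * p1 * x * p0 * p1)
      - hp0'.isIdempotentElem.eq * (x * p1 * b * p1 * x * p1 * p1)
      - p0 * x * p1 * b * p1 * x * hp1p1
  · intro hc
    have hd : p1 * (x * p1) * (b * (p1 * (x * p0))) = p1 * (x * p0) := by
      simpa only [star_mul, (hb.isSelfAdjoint ha).star_eq, hp0'.isSelfAdjoint.star_eq,
        hp1.isSelfAdjoint.star_eq, hx.star_eq, mul_assoc] using congrArg star hc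
    linear_combination (norm := noncomm_ring) -hc - hd - hsum * (x * (p0 + p1)) - x * hsum

end Ring

theorem LinearMap.ker_le_ker_iff_comp_comp_eq {R M N P : Type*} [Semiring R] [AddCommGroup M]
    [AddCommGroup N] [AddCommGroup P] [Module R M] [Module R N] [Module R P]
    {A : M →ₗ[R] N} {B : N →ₗ[R] M} {C : M →ₗ[R] P} (hA : A ∘ₗ B ∘ₗ A = A) :
    ker A ≤ ker C ↔ C ∘ₗ B ∘ₗ A = C := by
  refine ⟨fun h ↦ LinearMap.ext fun v ↦ ?_, fun h v hv ↦ ?_⟩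
  · have hABA : A (B (A v)) = A v := LinearMap.congr_fun hA v
    have hCv := h (show v - B (A v) ∈ ker A by rw [mem_ker, map_sub, hABA, sub_self])
    rw [mem_ker, map_sub, sub_eq_zero] at hCv
    exact hCv.symm
  · rw [mem_ker] at hv ⊢
    rw [← h, comp_apply, comp_apply, hv, map_zero, map_zero]

section InnerProductSpace

open scoped InnerProductSpace

variable {𝕜 E : Type*} [RCLike 𝕜] [NormedAddCommGroup E] [InnerProductSpace 𝕜 E]

theorem LinearMap.IsPositive.apply_eq_zero_of_inner_eq_zero {T : E →ₗ[𝕜] E} (hT : T.IsPositive)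
    {x : E} (hx : ⟪T x, x⟫_𝕜 = 0) : T x = 0 := by
  -- `0 ≤ re ⟪T y, y⟫` at `y = x + t • T x` is a quadratic in `t` with no constant term.
  have hquad : ∀ t : ℝ,
      0 ≤ RCLike.re ⟪T (T x), T x⟫_𝕜 * (t * t) + 2 * ‖T x‖ ^ 2 * t + 0 := by
    intro t
    have h := hT.re_inner_nonneg_left (x + (t : 𝕜) • T x)
    rw [map_add, map_smul, inner_add_left, inner_add_right, inner_add_right, inner_smul_left,
      inner_smul_right, inner_smul_left, inner_smul_right, hx, hT.isSymmetric (T x) x,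
      RCLike.conj_ofReal] at h
    simp only [zero_add, map_add, RCLike.re_ofReal_mul, inner_self_eq_norm_sq] at h
    linarith
  simpa [discrim] using discrim_le_zero hquad

theorem LinearMap.IsPositive.ker_mul_mul_le_ker_mul {T P : E →ₗ[𝕜] E} (hT : T.IsPositive)
    (hP : P.IsSymmetric) : ker (P * (T * P)) ≤ ker (T * P) := fun v hv ↦
  hT.apply_eq_zero_of_inner_eq_zero <| by rw [← hP, show P (T (P v)) = 0 from hv, inner_zero_left]

end InnerProductSpace

theorem stmt_8_general
    {𝕂 : Type*} [RCLike 𝕂]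
    {H : Type*} [NormedAddCommGroup H] [InnerProductSpace 𝕂 H] [FiniteDimensional 𝕂 H]
    (P0 P1 : H →ₗ[𝕂] H)
    (hP1 : P1 ∘ₗ P1 = P1) (hP1sa : LinearMap.adjoint P1 = P1)
    (hsum : P0 + P1 = 1)
    (X : H →ₗ[𝕂] H) (hXsa : LinearMap.adjoint X = X)
    (B : H →ₗ[𝕂] H)
    (hB1 : B ∘ₗ ((P1 ∘ₗ (X ∘ₗ P1)) ∘ₗ B) = B)
    (hB2 : (P1 ∘ₗ (X ∘ₗ P1)) ∘ₗ (B ∘ₗ (P1 ∘ₗ (X ∘ₗ P1))) = P1 ∘ₗ (X ∘ₗ P1))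
    (hB3 : LinearMap.adjoint (B ∘ₗ (P1 ∘ₗ (X ∘ₗ P1))) = B ∘ₗ (P1 ∘ₗ (X ∘ₗ P1)))
    (hB4 : LinearMap.adjoint ((P1 ∘ₗ (X ∘ₗ P1)) ∘ₗ B) = (P1 ∘ₗ (X ∘ₗ P1)) ∘ₗ B) :
    ((X = (1 + LinearMap.adjoint (B ∘ₗ (P1 ∘ₗ (X ∘ₗ P0)))) ∘ₗ
        (((gschurLM P0 P1 X B) + (P1 ∘ₗ (X ∘ₗ P1))) ∘ₗ
          (1 + B ∘ₗ (P1 ∘ₗ (X ∘ₗ P0))))) ↔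
      LinearMap.ker (P1 ∘ₗ (X ∘ₗ P1)) ≤ LinearMap.ker (P0 ∘ₗ (X ∘ₗ P1))) ∧
    ((∀ x : H, 0 ≤ RCLike.re (inner 𝕂 x (X x) : 𝕂)) →
      (LinearMap.ker (P1 ∘ₗ (X ∘ₗ P1)) ≤ LinearMap.ker (P0 ∘ₗ (X ∘ₗ P1)) ∧
        X = (1 + LinearMap.adjoint (B ∘ₗ (P1 ∘ₗ (X ∘ₗ P0)))) ∘ₗ
          (((gschurLM P0 P1 X B) + (P1 ∘ₗ (X ∘ₗ P1))) ∘ₗ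
            (1 + B ∘ₗ (P1 ∘ₗ (X ∘ₗ P0)))))) := by
  simp only [gschurLM, ← Module.End.mul_eq_comp, ← LinearMap.star_eq_adjoint]
    at hP1 hP1sa hXsa hB1 hB2 hB3 hB4 ⊢
  have hfact := (eq_schur_factorization_iff ⟨hP1, hP1sa⟩ hsum hXsa ⟨hB1, hB2, hB3, hB4⟩).trans
    (LinearMap.ker_le_ker_iff_comp_comp_eq hB2).symm
  refine ⟨hfact, fun hpos ↦ ?_⟩
  have hX : X.IsPositive := ⟨(LinearMap.isSymmetric_iff_isSelfAdjoint X).mpr hXsa,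
    fun x ↦ inner_re_symm (𝕜 := 𝕂) x _ ▸ hpos x⟩
  have hker : LinearMap.ker (P1 * (X * P1)) ≤ LinearMap.ker (P0 * (X * P1)) :=
    (hX.ker_mul_mul_le_ker_mul ((LinearMap.isSymmetric_iff_isSelfAdjoint P1).mpr hP1sa)).trans
      (LinearMap.ker_le_ker_comp _ _)
  exact ⟨hker, hfact.mpr hker⟩

/-- Aitken block-diagonalization conditions: for a self-adjoint operator
`X` on a finite-dimensional inner product space `H = H₀ ⊕ H₁` (orthogonal projections
`P0, P1`, blocks `Xᵢⱼ = Pᵢ X Pⱼ`), with `B = X₁₁⁺` the Moore–Penrose pseudoinverse of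
`X₁₁`, the factorization
`X = [[I, (X₁₁⁺X₁₀)*],[0, I]]·[[X/X₁₁, 0],[0, X₁₁]]·[[I, 0],[X₁₁⁺X₁₀, I]]` holds if and
only if `ker X₁₁ ⊆ ker X₀₁`; and if moreover `X ≥ 0`, then the kernel inclusion and the
factorization both hold. -/
theorem stmt_8
    {𝕂 : Type*} [RCLike 𝕂]
    {H : Type*} [NormedAddCommGroup H] [InnerProductSpace 𝕂 H] [FiniteDimensional 𝕂 H]
    (P0 P1 : H →ₗ[𝕂] H)
    (hP0 : P0 ∘ₗ P0 = P0) (hP0sa : LinearMap.adjoint P0 = P0)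
    (hP1 : P1 ∘ₗ P1 = P1) (hP1sa : LinearMap.adjoint P1 = P1)
    (hsum : P0 + P1 = 1)
    (X : H →ₗ[𝕂] H) (hXsa : LinearMap.adjoint X = X)
    (B : H →ₗ[𝕂] H)
    (hB1 : B ∘ₗ ((P1 ∘ₗ (X ∘ₗ P1)) ∘ₗ B) = B)
    (hB2 : (P1 ∘ₗ (X ∘ₗ P1)) ∘ₗ (B ∘ₗ (P1 ∘ₗ (X ∘ₗ P1))) = P1 ∘ₗ (X ∘ₗ P1))
    (hB3 : LinearMap.adjoint (B ∘ₗ (P1 ∘ₗ (X ∘ₗ P1))) = B ∘ₗ (P1 ∘ₗ (X ∘ₗ P1)))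
    (hB4 : LinearMap.adjoint ((P1 ∘ₗ (X ∘ₗ P1)) ∘ₗ B) = (P1 ∘ₗ (X ∘ₗ P1)) ∘ₗ B) :
    ((X = (1 + LinearMap.adjoint (B ∘ₗ (P1 ∘ₗ (X ∘ₗ P0)))) ∘ₗ
        (((gschurLM P0 P1 X B) + (P1 ∘ₗ (X ∘ₗ P1))) ∘ₗ
          (1 + B ∘ₗ (P1 ∘ₗ (X ∘ₗ P0))))) ↔
      LinearMap.ker (P1 ∘ₗ (X ∘ₗ P1)) ≤ LinearMap.ker (P0 ∘ₗ (X ∘ₗ P1))) ∧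
    ((∀ x : H, 0 ≤ RCLike.re (inner 𝕂 x (X x) : 𝕂)) →
      (LinearMap.ker (P1 ∘ₗ (X ∘ₗ P1)) ≤ LinearMap.ker (P0 ∘ₗ (X ∘ₗ P1)) ∧
        X = (1 + LinearMap.adjoint (B ∘ₗ (P1 ∘ₗ (X ∘ₗ P0)))) ∘ₗ
          (((gschurLM P0 P1 X B) + (P1 ∘ₗ (X ∘ₗ P1))) ∘ₗ
            (1 + B ∘ₗ (P1 ∘ₗ (X ∘ₗ P0)))))) :=
  stmt_8_general P0 P1 hP1 hP1sa hsum X hXsa B hB1 hB2 hB3 hB4
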